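/- (CS structure of recursive PD) Suppose a polyadic decomposition of T_{nnn} of length r = s + 3t is cyclic symmetric with factor matrices U = [A B C D], V = [A D B C], W = [A C D B], where A has s columns and B, C, D each have t columns. Then the recursive polyadic decomposition of T_{n²n²n²} of length r² obtained by Kronecker products is also cyclic symmetric, with parameters s' = s² and t' = t(s + r). -/

import Mathlib

/-!
The `n² × n²` multiplication tensor is the Kronecker square of the `n × n` one, after regrouping
each index `((i, j), (k, l))` of an `n² × n²` matrix as the pair `((i, k), (j, l))` of indices of
`n × n` matrices. So the Kronecker square of a cyclic symmetric decomposition of `T_{nnn}`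
decomposes `T_{n²n²n²}`, and the point is that it is again cyclic symmetric: a product of two
cubes `aᵢ⊗aᵢ⊗aᵢ` is a cube, a cube times a cyclic triple `b⊗d⊗c + c⊗b⊗d + d⊗c⊗b` (in either
order) is a cyclic triple, and the nine products of two cyclic triples group into three cyclic
triples. This gives `s²` cubes and `2st + 3t² = t(s + r)` triples.
-/

/-- The matrix multiplication tensor for square matrix multiplication, in entry form,
over an arbitrary index type `α` (so `α = Fin n` gives `T_{nnn}` and
`α = Fin n × Fin n` gives `T_{n²n²n²}`). -/
def Tsq {α : Type*} [DecidableEq α] (x y z : α × α) : ℝ :=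
  if x.1 = z.2 ∧ x.2 = y.1 ∧ y.2 = z.1 then 1 else 0

namespace CyclicSymmetric

variable {R α β γ ι ι' κ κ' : Type*} [CommSemiring R]

def cycTriple (b c d : α → R) (x y z : α) : R :=
  b x * d y * c z + c x * b y * d z + d x * c y * b z

def cubeSum [Fintype ι] (a : ι → α → R) (x y z : α) : R :=
  ∑ i, a i x * a i y * a i z

def cycSum [Fintype κ] (b c d : κ → α → R) (x y z : α) : R :=
  ∑ j, cycTriple (b j) (c j) (d j) x y z

def IsCSDecomp [Fintype ι] [Fintype κ] (T : α → α → α → R) (a : ι → α → R)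
    (b c d : κ → α → R) : Prop :=
  ∀ x y z, T x y z = cubeSum a x y z + cycSum b c d x y z

def kron (u : ι → α → R) (v : κ → β → R) : ι × κ → α × β → R :=
  fun p x => u p.1 x.1 * v p.2 x.2

def kronTensor (T : α → α → α → R) (T' : β → β → β → R) (x y z : α × β) : R :=
  T x.1 y.1 z.1 * T' x.2 y.2 z.2

section Products

variable [Fintype ι] [Fintype ι'] [Fintype κ] [Fintype κ']

lemma sum_mul_sum_eq_sum_prod (f : ι → R) (g : κ → R) (h : ι × κ → R)
    (hfg : ∀ i j, f i * g j = h (i, j)) : (∑ i, f i) * (∑ j, g j) = ∑ p, h p := by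
  simp only [Finset.sum_mul_sum, hfg, Fintype.sum_prod_type]

lemma cubeSum_mul_cubeSum (a : ι → α → R) (a' : ι' → β → R) (x y z : α) (x' y' z' : β) :
    cubeSum a x y z * cubeSum a' x' y' z' = cubeSum (kron a a') (x, x') (y, y') (z, z') :=
  sum_mul_sum_eq_sum_prod _ _ _ fun _ _ => by simp only [kron]; ring

lemma cubeSum_mul_cycSum (a : ι → α → R) (b c d : κ → β → R) (x y z : α) (x' y' z' : β) :
    cubeSum a x y z * cycSum b c d x' y' z' =
      cycSum (kron a b) (kron a c) (kron a d) (x, x') (y, y') (z, z') :=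
  sum_mul_sum_eq_sum_prod _ _ _ fun _ _ => by simp only [cycTriple, kron]; ring

lemma cycSum_mul_cubeSum (b c d : κ → α → R) (a : ι → β → R) (x y z : α) (x' y' z' : β) :
    cycSum b c d x y z * cubeSum a x' y' z' =
      cycSum (kron b a) (kron c a) (kron d a) (x, x') (y, y') (z, z') :=
  sum_mul_sum_eq_sum_prod _ _ _ fun _ _ => by simp only [cycTriple, kron]; ring

/-- The `k`-th rotation of `(b, d, c)` times the `(k + m)`-th rotation of `(b', d', c')`,
summed over `k`, is the `m`-th family on the right. -/
lemma cycSum_mul_cycSum (b c d : κ → α → R) (b' c' d' : κ' → β → R) (x y z : α) (x' y' z' : β) :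
    cycSum b c d x y z * cycSum b' c' d' x' y' z' =
      cycSum (kron b b') (kron c c') (kron d d') (x, x') (y, y') (z, z') +
        cycSum (kron b c') (kron c d') (kron d b') (x, x') (y, y') (z, z') +
        cycSum (kron b d') (kron c b') (kron d c') (x, x') (y, y') (z, z') := by
  simp only [cycSum, ← Finset.sum_add_distrib]
  exact sum_mul_sum_eq_sum_prod _ _ _ fun _ _ => by simp only [cycTriple, kron]; ring

end Products

lemma cycSum_sumElim [Fintype κ] [Fintype κ'] (b₁ c₁ d₁ : κ → α → R) (b₂ c₂ d₂ : κ' → α → R)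
    (x y z : α) :
    cycSum (Sum.elim b₁ b₂) (Sum.elim c₁ c₂) (Sum.elim d₁ d₂) x y z =
      cycSum b₁ c₁ d₁ x y z + cycSum b₂ c₂ d₂ x y z :=
  Fintype.sum_sum_type _

def kronFamily (a : ι → α → R) (a' : ι' → β → R) (f : κ → α → R) (f₀ f₁ f₂ : κ' → β → R) :
    ι × κ' ⊕ κ × ι' ⊕ κ × κ' ⊕ κ × κ' ⊕ κ × κ' → α × β → R :=
  Sum.elim (kron a f₀) (Sum.elim (kron f a') (Sum.elim (kron f f₀)
    (Sum.elim (kron f f₁) (kron f f₂))))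

namespace IsCSDecomp

variable [Fintype ι] [Fintype ι'] [Fintype κ] [Fintype κ']

theorem kron {T : α → α → α → R} {T' : β → β → β → R} {a : ι → α → R} {b c d : κ → α → R}
    {a' : ι' → β → R} {b' c' d' : κ' → β → R}
    (hT : IsCSDecomp T a b c d) (hT' : IsCSDecomp T' a' b' c' d') :
    IsCSDecomp (kronTensor T T') (kron a a') (kronFamily a a' b b' c' d')
      (kronFamily a a' c c' d' b') (kronFamily a a' d d' b' c') := by
  rintro ⟨x, x'⟩ ⟨y, y'⟩ ⟨z, z'⟩
  simp only [kronTensor, kronFamily, cycSum_sumElim, hT x y z, hT' x' y' z',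
    add_mul, mul_add, cubeSum_mul_cubeSum, cubeSum_mul_cycSum, cycSum_mul_cubeSum,
    cycSum_mul_cycSum]
  ring

theorem comp {T : α → α → α → R} {a : ι → α → R} {b c d : κ → α → R}
    (hT : IsCSDecomp T a b c d) {S : γ → γ → γ → R} (g : γ → α)
    (hS : ∀ x y z, S x y z = T (g x) (g y) (g z)) :
    IsCSDecomp S (fun i => a i ∘ g) (fun j => b j ∘ g) (fun j => c j ∘ g) (fun j => d j ∘ g) :=
  fun x y z => (hS x y z).trans (hT (g x) (g y) (g z))

theorem reindex {T : α → α → α → R} {a : ι → α → R} {b c d : κ → α → R}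
    (hT : IsCSDecomp T a b c d) (e : ι' ≃ ι) (f : κ' ≃ κ) :
    IsCSDecomp T (a ∘ e) (b ∘ f) (c ∘ f) (d ∘ f) := by
  intro x y z
  rw [hT x y z, cubeSum, cycSum, ← Equiv.sum_comp e, ← Equiv.sum_comp f]
  rfl

end IsCSDecomp

theorem Tsq_eq_kronTensor {α β : Type*} [DecidableEq α] [DecidableEq β] (x y z : (α × β) × α × β) :
    Tsq x y z = kronTensor Tsq Tsq (Equiv.prodProdProdComm α β α β x)
      (Equiv.prodProdProdComm α β α β y) (Equiv.prodProdProdComm α β α β z) := by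
  simp only [Tsq, kronTensor, Equiv.prodProdProdComm_apply, ite_zero_mul_ite_zero, one_mul,
    Prod.ext_iff]
  congr 1
  exact propext (by tauto)

end CyclicSymmetric

open CyclicSymmetric in
/-- CS structure of the recursive PD: if `T_{nnn}` has a cyclic symmetric
polyadic decomposition of length `r = s + 3t` with parameters `(s, t)`, then
`T_{n²n²n²}` has a cyclic symmetric polyadic decomposition of length `r²` with
parameters `s' = s²` and `t' = t(s + r)`. -/
theorem cs_recursive_pd (n s t r : ℕ) (hr : r = s + 3 * t)
    (a : Fin s → (Fin n × Fin n) → ℝ) (b c d : Fin t → (Fin n × Fin n) → ℝ)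
    (h : ∀ x y z : Fin n × Fin n,
      Tsq x y z = ∑ i : Fin s, a i x * a i y * a i z +
        ∑ j : Fin t, (b j x * d j y * c j z + c j x * b j y * d j z +
          d j x * c j y * b j z)) :
    ∃ (a' : Fin (s * s) → ((Fin n × Fin n) × (Fin n × Fin n)) → ℝ)
      (b' c' d' : Fin (t * (s + r)) → ((Fin n × Fin n) × (Fin n × Fin n)) → ℝ),
      ∀ x y z : (Fin n × Fin n) × (Fin n × Fin n),
        Tsq x y z = ∑ i : Fin (s * s), a' i x * a' i y * a' i z +
          ∑ j : Fin (t * (s + r)), (b' j x * d' j y * c' j z +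
            c' j x * b' j y * d' j z + d' j x * c' j y * b' j z) := by
  have hT : IsCSDecomp Tsq a b c d := h
  have hcard : Fintype.card (Fin s × Fin t ⊕ Fin t × Fin s ⊕ Fin t × Fin t ⊕ Fin t × Fin t ⊕
      Fin t × Fin t) = t * (s + r) := by
    simp only [Fintype.card_sum, Fintype.card_prod, Fintype.card_fin, hr]
    ring
  have hT₂ := ((hT.kron hT).comp _ Tsq_eq_kronTensor).reindex finProdFinEquiv.symm
    (Fintype.equivFinOfCardEq hcard).symm
  exact ⟨_, _, _, _, hT₂⟩
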